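/- arXiv:1402.5361 — 3 statements merged into one kernel-verified Lean document; each statement's English description precedes it below -/
import Mathlib

section
/- Let h = (1, h_1, …, h_{s-1}) be a finite O-sequence of multiplicity d with h ≠ (1, d-1). Then the sequence h' = h - e_{s-1} + e_1, obtained by decreasing the last entry of h by 1 (deleting it if it equals 1) and increasing h_1 by 1, is a finite O-sequence of multiplicity d. Moreover, iterating this operation starting from any finite O-sequence of multiplicity d reaches the O-sequence (1, d-1) after finitely many steps. -/
/-- The Macaulay bound `a^⟨t⟩`: if `a = C(k_t,t) + C(k_{t-1},t-1) + ⋯ + C(k_j,j)` is the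
binomial expansion of `a` in base `t`, then `a^⟨t⟩ = C(k_t+1,t+1) + ⋯ + C(k_j+1,j+1)`.
Computed greedily; `mac t a = a^⟨t⟩` for `t ≥ 1`. -/
def mac : ℕ → ℕ → ℕ
  | 0, _ => 0
  | t+1, a =>
    if a = 0 then 0
    else
      Nat.choose (Nat.findGreatest (fun n => Nat.choose n (t+1) ≤ a) (a + t + 1) + 1) (t+2) +
        mac t (a - Nat.choose (Nat.findGreatest (fun n => Nat.choose n (t+1) ≤ a) (a + t + 1)) (t+1))

/-- `h : ℕ → ℕ` is a finite O-sequence of length `s`: `h 0 = 1`, the entries `h 0, …, h (s-1)`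
are positive, entries from index `s` on are zero, and `h (t+1) ≤ (h t)^⟨t⟩` for all `t ≥ 1`. -/
def IsOSeq (h : ℕ → ℕ) (s : ℕ) : Prop :=
  h 0 = 1 ∧ (∀ i, 0 < h i ↔ i < s) ∧ ∀ t, 1 ≤ t → h (t + 1) ≤ mac t (h t)

/-- The multiplicity `e(h) = h_0 + ⋯ + h_{s-1}` of a finite O-sequence of length `s`. -/
def mult (h : ℕ → ℕ) (s : ℕ) : ℕ := ∑ i ∈ Finset.range s, h i

/-- The genus `g(h) = Σ_{j=2}^{s-1} (j-1)·h_j` of a finite O-sequence of length `s`. -/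
def genus (h : ℕ → ℕ) (s : ℕ) : ℕ := ∑ j ∈ Finset.range s, (j - 1) * h j

/-- The sequence obtained from `h` by increasing the `i`-th entry by `1`, i.e. `h + e_i`. -/
def addE (h : ℕ → ℕ) (i : ℕ) : ℕ → ℕ := fun j => if j = i then h j + 1 else h j

/-- The sequence obtained from `h` by decreasing the `i`-th entry by `1`, i.e. `h - e_i`. -/
def subE (h : ℕ → ℕ) (i : ℕ) : ℕ → ℕ := fun j => if j = i then h j - 1 else h j

/-- The total order on finite O-sequences of the same length: `oLT h k` iff `h_ℓ < k_ℓ`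
where `ℓ = max{ j : h_j ≠ k_j }`. -/
def oLT (h k : ℕ → ℕ) : Prop := ∃ ℓ, h ℓ < k ℓ ∧ ∀ j, ℓ < j → h j = k j

/-- The set of genera of finite O-sequences of multiplicity `d` and length `s`. -/
def genusSet (d s : ℕ) : Set ℕ := {g | ∃ h, IsOSeq h s ∧ mult h s = d ∧ genus h s = g}

/-- `G_d`: the set of genera of finite O-sequences of multiplicity `d` (of any length). -/
def GSet (d : ℕ) : Set ℕ := {g | ∃ h s, IsOSeq h s ∧ mult h s = d ∧ genus h s = g}

/-- `g` is a gap in `R_d = [0, C(d-1,2)]`: it lies in the range but is not the genus of any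
finite O-sequence of multiplicity `d`. -/
def IsGap (d g : ℕ) : Prop :=
  g ≤ Nat.choose (d - 1) 2 ∧ ∀ h s, IsOSeq h s → mult h s = d → genus h s ≠ g

/-- The O-sequence `(1, d-s+1, 1^{s-2})`, minimal in `𝒢_d^s`. -/
def minSeq (d s : ℕ) : ℕ → ℕ :=
  fun j => if j = 0 then 1 else if j = 1 then d - s + 1 else if j < s then 1 else 0

/-- The O-sequence `(1, 2^{d-s}, 1^{2s-d-1})`, maximal in `𝒢_d^s`. -/
def maxSeq (d s : ℕ) : ℕ → ℕ :=
  fun j => if j = 0 then 1 else if j ≤ d - s then 2 else if j < s then 1 else 0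

/-- The O-sequence `(1, d-1)`. -/
def twoSeq (d : ℕ) : ℕ → ℕ := fun j => if j = 0 then 1 else if j = 1 then d - 1 else 0

/-- The operation `h ↦ h - e_{s-1} + e_1` on a sequence of length `s`. -/
def downUp (h : ℕ → ℕ) (s : ℕ) : ℕ → ℕ :=
  fun j => if j = s - 1 then h j - 1 else if j = 1 then h j + 1 else h j

/-- The largest index `1 ≤ j ≤ s-1` with `h j > 1` (and `0` if there is none). -/
def topIdx (h : ℕ → ℕ) (s : ℕ) : ℕ := Nat.findGreatest (fun j => 1 < h j) (s - 1)

/-- The operation `h ↦ h - e_i + e_1` where `i = topIdx h s`. -/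
def shiftDown (h : ℕ → ℕ) (s : ℕ) : ℕ → ℕ :=
  fun j => if j = topIdx h s then h j - 1 else if j = 1 then h j + 1 else h j

/-- Auxiliary list `[m_n, m_{n-1}, …, m_1]` for the recursively defined sequence `(m_d)`. -/
def mListAux : ℕ → List ℕ
  | 0 => []
  | n+1 =>
    let prev := mListAux n
    let newVal :=
      if n = 0 then 0
      else
        (List.range' 2 (n - 1)).foldl
          (fun M k =>
            if Nat.choose k 2 - 1 ≤ M then max M (prev.getD (k - 1) 0 + Nat.choose k 2) else M)
          (prev.getD 0 0)
    newVal :: prev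

/-- The sequence `(m_d)_{d ≥ 1}`: `m_1 = 0` and, for `d ≥ 2`, `m_d` is obtained from
`M := m_{d-1}` by running over `k = 2, …, d-1` and replacing `M` by
`max M (m_{d-k} + C(k,2))` whenever `C(k,2) - 1 ≤ M`. -/
def mSeq (d : ℕ) : ℕ := (mListAux d).getD 0 0

/- Proof idea: `h ↦ h - e_{s-1} + e_1` only raises `h_1`, and the single Macaulay bound involving
`h_1` is `h_2 ≤ h_1^⟨1⟩ = C(h_1 + 1, 2)`, which is monotone in `h_1`; every other bound is
untouched or loosened. The multiplicity is preserved, while the genus `Σ (j-1) h_j` drops by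
`s - 2 ≥ 1`. Sequences of length `s < 3` are exactly `(1, d-1)`, so iterating the operation from any
O-sequence must reach `(1, d-1)`. -/

open Finset

def downUpLength (h : ℕ → ℕ) (s : ℕ) : ℕ := if h (s - 1) = 1 then s - 1 else s

lemma downUpLength_le (h : ℕ → ℕ) (s : ℕ) : downUpLength h s ≤ s := by
  unfold downUpLength; split_ifs <;> omega

lemma mac_one (a : ℕ) : mac 1 a = (a + 1).choose 2 := by
  rcases Nat.eq_zero_or_pos a with rfl | ha
  · simp [mac]
  have hK : Nat.findGreatest (fun n => n.choose 1 ≤ a) (a + 0 + 1) = a := by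
    rw [Nat.findGreatest_eq_iff]
    refine ⟨by omega, fun _ => by simp, fun n hn _ => ?_⟩
    simp only [Nat.choose_one_right]
    omega
  change mac (0 + 1) a = _
  rw [mac, if_neg ha.ne', hK]
  simp [mac]

lemma mac_one_mono {a b : ℕ} (hab : a ≤ b) : mac 1 a ≤ mac 1 b := by
  simpa only [mac_one] using Nat.choose_le_choose 2 (Nat.add_le_add_right hab 1)

namespace IsOSeq

variable {h : ℕ → ℕ} {s : ℕ}

lemma eq_zero_of_le (hO : IsOSeq h s) {i : ℕ} (hi : s ≤ i) : h i = 0 := by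
  have := hO.2.1 i; omega

lemma sum_range_mul_of_le (hO : IsOSeq h s) {m : ℕ} (hsm : s ≤ m) (w : ℕ → ℕ) :
    ∑ i ∈ range m, w i * h i = ∑ i ∈ range s, w i * h i := by
  refine (sum_subset (range_subset_range.2 hsm) fun i _ hi => ?_).symm
  rw [hO.eq_zero_of_le (by simpa using hi), mul_zero]

lemma eq_twoSeq_of_lt_three (hO : IsOSeq h s) (hs : s < 3) : h = twoSeq (mult h s) := by
  have hs0 : 0 < s := (hO.2.1 0).1 (by rw [hO.1]; omega)
  have hmult : mult h s = 1 + h 1 := by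
    interval_cases s <;> simp [mult, sum_range_succ, hO.1, hO.eq_zero_of_le]
  funext j
  rcases j with _ | _ | j
  · simp [twoSeq, hO.1]
  · simp [twoSeq, hmult]
  · simp [twoSeq, hO.eq_zero_of_le (show s ≤ j + 2 by omega)]

lemma three_le_of_ne_twoSeq (hO : IsOSeq h s) (hne : h ≠ twoSeq (mult h s)) : 3 ≤ s := by
  by_contra hs
  exact hne (hO.eq_twoSeq_of_lt_three (by omega))

lemma last_pos (hO : IsOSeq h s) (hs : 0 < s) : 0 < h (s - 1) :=
  (hO.2.1 _).2 (by omega)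

end IsOSeq

section downUp

variable {h : ℕ → ℕ} {s : ℕ}

lemma downUp_of_ne {j : ℕ} (hj1 : j ≠ 1) (hjs : j ≠ s - 1) : downUp h s j = h j := by
  simp [downUp, hj1, hjs]

lemma downUp_one (hs : 3 ≤ s) : downUp h s 1 = h 1 + 1 := by
  simp [downUp, show 1 ≠ s - 1 by omega]

lemma downUp_le_of_ne_one {j : ℕ} (hj1 : j ≠ 1) : downUp h s j ≤ h j := by
  unfold downUp; split_ifs <;> omega

lemma sum_range_mul_downUp (hs : 3 ≤ s) (hlast : 0 < h (s - 1)) (w : ℕ → ℕ) :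
    ∑ i ∈ range s, w i * downUp h s i + w (s - 1) = ∑ i ∈ range s, w i * h i + w 1 := by
  have hpt : ∀ i, downUp h s i + (if i = s - 1 then 1 else 0) = h i + (if i = 1 then 1 else 0) := by
    intro i; unfold downUp; split_ifs <;> subst_vars <;> omega
  have hsum := Finset.sum_congr rfl fun i (_ : i ∈ range s) => congrArg (w i * ·) (hpt i)
  simp only [mul_add, sum_add_distrib, mul_ite, mul_one, mul_zero, sum_ite_eq', mem_range] at hsum
  simpa [show s - 1 < s by omega, show 1 < s by omega] using hsum

lemma isOSeq_downUp (hO : IsOSeq h s) (hs : 3 ≤ s) :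
    IsOSeq (downUp h s) (downUpLength h s) := by
  have hlast := hO.last_pos (by omega)
  obtain ⟨h0, hpos, hmac⟩ := hO
  refine ⟨by rw [downUp_of_ne (by omega) (by omega), h0], fun i => ?_, fun t ht => ?_⟩
  · unfold downUpLength downUp
    have := hpos i
    split_ifs <;> subst_vars <;> omega
  · rcases lt_or_ge t (s - 1) with hts | hts
    · calc downUp h s (t + 1) ≤ h (t + 1) := downUp_le_of_ne_one (by omega)
        _ ≤ mac t (h t) := hmac t ht
        _ ≤ mac t (downUp h s t) := by
          rcases eq_or_ne t 1 with rfl | ht1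
          · exact mac_one_mono (by rw [downUp_one hs]; omega)
          · rw [downUp_of_ne ht1 (by omega)]
    · have : h (t + 1) = 0 := by have := hpos (t + 1); omega
      simp [downUp_of_ne (show t + 1 ≠ 1 by omega) (show t + 1 ≠ s - 1 by omega), this]

lemma mult_downUp (hO : IsOSeq h s) (hs : 3 ≤ s) :
    mult (downUp h s) (downUpLength h s) = mult h s := by
  have hsum := sum_range_mul_downUp hs (hO.last_pos (by omega)) fun _ => 1
  have hlen := (isOSeq_downUp hO hs).sum_range_mul_of_le (downUpLength_le h s) fun _ => 1
  simp only [one_mul] at hsum hlen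
  simp only [mult, ← hlen]
  omega

lemma genus_downUp (hO : IsOSeq h s) (hs : 3 ≤ s) :
    genus (downUp h s) (downUpLength h s) + (s - 2) = genus h s := by
  have hsum := sum_range_mul_downUp hs (hO.last_pos (by omega)) fun i => i - 1
  have hlen := (isOSeq_downUp hO hs).sum_range_mul_of_le (downUpLength_le h s) fun i => i - 1
  simp only [genus, ← hlen]
  omega

end downUp

def downUpStep (p : (ℕ → ℕ) × ℕ) : (ℕ → ℕ) × ℕ := (downUp p.1 p.2, downUpLength p.1 p.2)

lemma exists_iterate_downUpStep_eq_twoSeq {k : ℕ → ℕ} {σ₀ : ℕ} (hk : IsOSeq k σ₀) :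
    ∃ N, (downUpStep^[N] (k, σ₀)).1 = twoSeq (mult k σ₀) := by
  induction hg : genus k σ₀ using Nat.strong_induction_on generalizing k σ₀ with
  | _ g IH =>
    by_cases hne : k = twoSeq (mult k σ₀)
    · exact ⟨0, hne⟩
    have hs := hk.three_le_of_ne_twoSeq hne
    obtain ⟨N, hN⟩ := IH _ (by have := genus_downUp hk hs; omega) (isOSeq_downUp hk hs) rfl
    exact ⟨N + 1, by rwa [Function.iterate_succ_apply, ← mult_downUp hk hs]⟩

lemma isOSeq_iterate_downUpStep {k : ℕ → ℕ} {σ₀ : ℕ} (hk : IsOSeq k σ₀) {N : ℕ}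
    (hne : ∀ m < N, (downUpStep^[m] (k, σ₀)).1 ≠ twoSeq (mult k σ₀)) :
    IsOSeq (downUpStep^[N] (k, σ₀)).1 (downUpStep^[N] (k, σ₀)).2 ∧
      mult (downUpStep^[N] (k, σ₀)).1 (downUpStep^[N] (k, σ₀)).2 = mult k σ₀ := by
  induction N with
  | zero => exact ⟨hk, rfl⟩
  | succ N ih =>
    obtain ⟨hO, hmult⟩ := ih fun m hm => hne m (by omega)
    have hs := hO.three_le_of_ne_twoSeq (hmult ▸ hne N (by omega))
    rw [Function.iterate_succ_apply']
    exact ⟨isOSeq_downUp hO hs, (mult_downUp hO hs).trans hmult⟩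

/-- If `h` is a finite O-sequence of multiplicity `d` with `h ≠ (1, d-1)`,
then `h' = h - e_{s-1} + e_1` (the last entry disappears when it equals `1`) is a finite
O-sequence of multiplicity `d`. Moreover, iterating this operation starting from any finite
O-sequence of multiplicity `d` reaches `(1, d-1)` after finitely many steps. -/
theorem stmt2 (h : ℕ → ℕ) (s d : ℕ) (hO : IsOSeq h s) (he : mult h s = d)
    (hne : h ≠ twoSeq d) :
    (IsOSeq (downUp h s) (if h (s - 1) = 1 then s - 1 else s) ∧
      mult (downUp h s) (if h (s - 1) = 1 then s - 1 else s) = d) ∧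
    (∀ (k : ℕ → ℕ) (σ₀ : ℕ), IsOSeq k σ₀ → mult k σ₀ = d →
      ∃ (N : ℕ) (c : ℕ → ℕ → ℕ) (σ : ℕ → ℕ),
        c 0 = k ∧ σ 0 = σ₀ ∧ c N = twoSeq d ∧
        (∀ m, m < N → IsOSeq (c m) (σ m) ∧ c m ≠ twoSeq d ∧
          c (m + 1) = downUp (c m) (σ m) ∧
          σ (m + 1) = if c m (σ m - 1) = 1 then σ m - 1 else σ m)) := by
  subst he
  have hs := hO.three_le_of_ne_twoSeq hne
  refine ⟨⟨isOSeq_downUp hO hs, mult_downUp hO hs⟩, fun k σ₀ hk hmult => ?_⟩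
  classical
  rw [← hmult]
  have hex := exists_iterate_downUpStep_eq_twoSeq hk
  refine ⟨Nat.find hex, fun m => (downUpStep^[m] (k, σ₀)).1, fun m => (downUpStep^[m] (k, σ₀)).2,
    rfl, rfl, Nat.find_spec hex, fun m hm => ⟨?_, Nat.find_min hex hm, ?_, ?_⟩⟩
  · exact (isOSeq_iterate_downUpStep hk fun j hj => Nat.find_min hex (hj.trans hm)).1
  all_goals simp only [Function.iterate_succ_apply']; rfl
end

section
/- For all integers d ≥ s ≥ 2, the set of finite O-sequences of multiplicity d and length s is finite and nonempty, and its maximum h_max with respect to the total order < satisfies g(h_max) = max{ g(h) : h a finite O-sequence of multiplicity d and length s }. -/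
/-! Sequences of multiplicity `d` have entries at most `d`, so `oLT` compares them as numbers
written in base `d + 1`; hence there is an O-sequence that is maximal first for the genus and
then for `oLT`. It is the `oLT`-maximum: were it below some `k`, let `j` be the highest index
below the top difference where it exceeds `k`, and `i > j` the next index where it falls short
of `k`. Moving one unit from `j` to `i` stays between `k` and the sequence itself where it
matters, so by monotonicity of the Macaulay bound it is again an O-sequence, it is larger for
`oLT`, and its genus grows by `i - j`. -/

/-- The top index `k_t` of the binomial expansion of `a` in base `t + 1`. -/
def macIdx (t a : ℕ) : ℕ := Nat.findGreatest (fun n => n.choose (t + 1) ≤ a) (a + t + 1)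

lemma mac_zero_right (t : ℕ) : mac t 0 = 0 := by
  cases t <;> simp [mac]

lemma mac_succ (t : ℕ) {a : ℕ} (ha : a ≠ 0) :
    mac (t + 1) a =
      (macIdx t a + 1).choose (t + 2) + mac t (a - (macIdx t a).choose (t + 1)) := by
  rw [mac, if_neg ha, macIdx]

lemma lt_choose_add_succ (t a : ℕ) : a < (a + t + 1).choose (t + 1) := by
  induction t with
  | zero => simp
  | succ t ih =>
    rw [show a + (t + 1) + 1 = a + t + 1 + 1 by ring, Nat.choose_succ_succ']
    omega

lemma macIdx_spec (t : ℕ) {a : ℕ} (ha : 0 < a) :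
    t + 1 ≤ macIdx t a ∧ (macIdx t a).choose (t + 1) ≤ a ∧
      a < (macIdx t a + 1).choose (t + 1) := by
  have hbase : (t + 1).choose (t + 1) ≤ a := by rwa [Nat.choose_self]
  have hle : macIdx t a ≤ a + t + 1 := Nat.findGreatest_le _
  have hspec : (macIdx t a).choose (t + 1) ≤ a :=
    Nat.findGreatest_spec (P := fun n => n.choose (t + 1) ≤ a) (by omega) hbase
  have hlt : macIdx t a < a + t + 1 := by
    refine lt_of_le_of_ne hle fun heq => ?_
    rw [heq] at hspec
    exact absurd hspec (not_le.2 (lt_choose_add_succ t a))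
  exact ⟨Nat.le_findGreatest (by omega) hbase, hspec,
    not_le.1 (Nat.findGreatest_is_greatest (P := fun n => n.choose (t + 1) ≤ a)
      (Nat.lt_succ_self _) hlt)⟩

lemma mac_lt_choose_succ (t : ℕ) {a m : ℕ} (h : a < m.choose t) :
    mac t a < (m + 1).choose (t + 1) := by
  induction t generalizing a m with
  | zero => simp_all [mac]
  | succ t ih =>
    have hm : t + 1 ≤ m := by
      by_contra hc
      rw [Nat.choose_eq_zero_of_lt (by omega)] at h
      omega
    rcases Nat.eq_zero_or_pos a with rfl | ha
    · rw [mac_zero_right]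
      exact Nat.choose_pos (by omega)
    rw [mac_succ t ha.ne']
    obtain ⟨-, hk, hk'⟩ := macIdx_spec t ha
    generalize macIdx t a = k at hk hk' ⊢
    have hkm : k < m := by
      by_contra hc
      have := Nat.choose_le_choose (t + 1) (not_lt.1 hc)
      omega
    have hrest : mac t (a - k.choose (t + 1)) < (k + 1).choose (t + 1) :=
      ih (by rw [Nat.choose_succ_succ'] at hk'; omega)
    calc _ < (k + 1).choose (t + 2) + (k + 1).choose (t + 1) := by omega
      _ = (k + 2).choose (t + 2) := by
        rw [add_comm]; exact (Nat.choose_succ_succ' (k + 1) (t + 1)).symm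
      _ ≤ (m + 1).choose (t + 1 + 1) := Nat.choose_le_choose _ (by omega)

lemma mac_mono (t : ℕ) : Monotone (mac t) := by
  induction t with
  | zero => intro a b _; simp [mac]
  | succ t ih =>
    intro a b hab
    rcases Nat.eq_zero_or_pos a with rfl | ha
    · simp [mac_zero_right]
    obtain ⟨-, hka, hka'⟩ := macIdx_spec t ha
    obtain ⟨-, hkb, hkb'⟩ := macIdx_spec t (lt_of_lt_of_le ha hab)
    have hk : macIdx t a ≤ macIdx t b := by
      by_contra hc
      have := Nat.choose_le_choose (t + 1) (show macIdx t b + 1 ≤ macIdx t a by omega)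
      omega
    rw [mac_succ t (by omega : b ≠ 0)]
    rcases hk.eq_or_lt with heq | hlt
    · rw [mac_succ t ha.ne', heq]
      have := ih (Nat.sub_le_sub_right hab ((macIdx t b).choose (t + 1)))
      omega
    · calc mac (t + 1) a ≤ (macIdx t a + 2).choose (t + 2) :=
            (mac_lt_choose_succ (t + 1) hka').le
        _ ≤ (macIdx t b + 1).choose (t + 2) := Nat.choose_le_choose _ (by omega)
        _ ≤ _ := Nat.le_add_right _ _

lemma mac_pos (t : ℕ) {a : ℕ} (ha : 0 < a) : 0 < mac (t + 1) a := by
  rw [mac_succ t ha.ne']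
  have := Nat.choose_pos (show t + 2 ≤ macIdx t a + 1 by linarith [(macIdx_spec t ha).1])
  omega

open Finset

lemma finite_setOf_le_of_eq_zero (s d : ℕ) :
    {h : ℕ → ℕ | (∀ i, h i ≤ d) ∧ ∀ i, s ≤ i → h i = 0}.Finite := by
  refine (Set.finite_range fun (f : Fin s → Fin (d + 1)) (x : ℕ) =>
    if hx : x < s then (f ⟨x, hx⟩ : ℕ) else 0).subset ?_
  rintro h ⟨hle, hzero⟩
  refine ⟨fun x => ⟨h x, Nat.lt_succ_of_le (hle x)⟩, funext fun x => ?_⟩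
  by_cases hx : x < s
  · simp [hx]
  · simp [hx, hzero x (not_lt.1 hx)]

lemma sum_range_eq_add_add_sum_Ico {M : Type*} [AddCommMonoid M] (f : ℕ → M) {ℓ s : ℕ}
    (hℓ : ℓ < s) :
    ∑ x ∈ range s, f x = ∑ x ∈ range ℓ, f x + f ℓ + ∑ x ∈ Ico (ℓ + 1) s, f x := by
  rw [← sum_range_add_sum_Ico f hℓ, sum_range_succ]

lemma sum_range_pow_mul_lt {b n : ℕ} {f : ℕ → ℕ} (hf : ∀ i < n, f i < b) :
    ∑ i ∈ range n, b ^ i * f i < b ^ n := by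
  induction n with
  | zero => simp
  | succ n ih =>
    calc ∑ i ∈ range (n + 1), b ^ i * f i < b ^ n + b ^ n * f n := by
          rw [sum_range_succ]
          exact Nat.add_lt_add_right (ih fun i hi => hf i (by omega)) _
      _ = b ^ n * (f n + 1) := by ring
      _ ≤ b ^ n * b := Nat.mul_le_mul_left _ (hf n (by omega))
      _ = b ^ (n + 1) := (pow_succ b n).symm

lemma oLT.exists_witness_lt {h k : ℕ → ℕ} {s : ℕ} (hlt : oLT h k)
    (hk : ∀ i, s ≤ i → k i = 0) :
    ∃ ℓ < s, h ℓ < k ℓ ∧ ∀ j, ℓ < j → h j = k j := by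
  obtain ⟨ℓ, hℓ, habove⟩ := hlt
  refine ⟨ℓ, ?_, hℓ, habove⟩
  by_contra hs
  rw [hk ℓ (not_lt.1 hs)] at hℓ
  omega

lemma oLT_or_oLT_of_ne {h k : ℕ → ℕ} (s : ℕ) (hh : ∀ i, s ≤ i → h i = 0)
    (hk : ∀ i, s ≤ i → k i = 0) (hne : h ≠ k) : oLT h k ∨ oLT k h := by
  obtain ⟨m, hm⟩ := Function.ne_iff.1 hne
  have hms : m ≤ s := by
    by_contra hc
    exact hm (by rw [hh m (by omega), hk m (by omega)])
  set ℓ := Nat.findGreatest (fun i => h i ≠ k i) s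
  have hℓ : h ℓ ≠ k ℓ := Nat.findGreatest_spec (P := fun i => h i ≠ k i) hms hm
  have habove : ∀ j, ℓ < j → h j = k j := by
    intro j hj
    by_cases hjs : j ≤ s
    · exact not_not.1 (Nat.findGreatest_is_greatest hj hjs)
    · rw [hh j (by omega), hk j (by omega)]
  rcases lt_or_gt_of_ne hℓ with hlt | hgt
  · exact Or.inl ⟨ℓ, hlt, habove⟩
  · exact Or.inr ⟨ℓ, hgt, fun j hj => (habove j hj).symm⟩

def weight (b s : ℕ) (h : ℕ → ℕ) : ℕ := ∑ i ∈ range s, b ^ i * h i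

lemma weight_lt_weight_of_oLT {b s : ℕ} {h k : ℕ → ℕ} (hh : ∀ i < s, h i < b)
    (hk : ∀ i, s ≤ i → k i = 0) (hlt : oLT h k) : weight b s h < weight b s k := by
  obtain ⟨ℓ, hℓs, hℓ, habove⟩ := hlt.exists_witness_lt hk
  have htail : ∑ i ∈ Ico (ℓ + 1) s, b ^ i * h i = ∑ i ∈ Ico (ℓ + 1) s, b ^ i * k i :=
    sum_congr rfl fun i hi => by rw [habove i (mem_Ico.1 hi).1]
  have hlow : ∑ i ∈ range ℓ, b ^ i * h i < b ^ ℓ :=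
    sum_range_pow_mul_lt fun i hi => hh i (by omega)
  have hstep : b ^ ℓ * h ℓ + b ^ ℓ ≤ b ^ ℓ * k ℓ :=
    Nat.mul_succ _ _ ▸ Nat.mul_le_mul_left _ hℓ
  unfold weight
  rw [sum_range_eq_add_add_sum_Ico _ hℓs, sum_range_eq_add_add_sum_Ico _ hℓs, htail]
  omega

lemma exists_exchange_indices {h k : ℕ → ℕ} {ℓ : ℕ} (hℓ : h ℓ < k ℓ)
    (hsum : ∑ x ∈ range ℓ, k x < ∑ x ∈ range ℓ, h x) :
    ∃ j i, j < i ∧ i ≤ ℓ ∧ k j < h j ∧ h i < k i ∧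
      ∀ x, j < x → x < i → h x = k x := by
  obtain ⟨m, hm, hkm⟩ := exists_lt_of_sum_lt hsum
  set j := Nat.findGreatest (fun x => k x < h x) ℓ
  have hj : k j < h j := Nat.findGreatest_spec (P := fun x => k x < h x)
    (mem_range.1 hm).le hkm
  have hjℓ : j < ℓ :=
    lt_of_le_of_ne (Nat.findGreatest_le ℓ) fun heq => by rw [heq] at hj; omega
  have hex : ∃ i, j < i ∧ h i < k i := ⟨ℓ, hjℓ, hℓ⟩
  refine ⟨j, Nat.find hex, (Nat.find_spec hex).1, Nat.find_min' hex ⟨hjℓ, hℓ⟩, hj,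
    (Nat.find_spec hex).2, fun x hjx hxi => ?_⟩
  have hle : h x ≤ k x := not_lt.1 (Nat.findGreatest_is_greatest (P := fun x => k x < h x)
    hjx ((Nat.find_min' hex ⟨hjℓ, hℓ⟩).trans' hxi.le))
  have hge : k x ≤ h x := not_lt.1 fun hlt => Nat.find_min hex hxi ⟨hjx, hlt⟩
  omega

lemma sum_mul_addE (w h : ℕ → ℕ) {i s : ℕ} (hi : i < s) :
    ∑ x ∈ range s, w x * addE h i x = ∑ x ∈ range s, w x * h x + w i := by
  have hpt : ∀ x, w x * addE h i x = w x * h x + if x = i then w x else 0 := by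
    intro x; unfold addE; split_ifs <;> ring
  simp only [hpt, sum_add_distrib, sum_ite_eq', mem_range, hi, if_true]

lemma sum_mul_subE (w h : ℕ → ℕ) {j s : ℕ} (hj : j < s) (hpos : 0 < h j) :
    ∑ x ∈ range s, w x * subE h j x + w j = ∑ x ∈ range s, w x * h x := by
  have hpt : ∀ x, w x * h x = w x * subE h j x + if x = j then w x else 0 := by
    intro x; unfold subE; split_ifs with hx
    · subst hx; rw [← Nat.mul_succ, Nat.succ_eq_add_one, Nat.sub_add_cancel hpos]
    · rw [add_zero]
  simp only [hpt, sum_add_distrib, sum_ite_eq', mem_range, hj, if_true]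

namespace IsOSeq

variable {h k : ℕ → ℕ} {s : ℕ}

lemma eq_zero (hh : IsOSeq h s) {i : ℕ} (hi : s ≤ i) : h i = 0 :=
  Nat.eq_zero_of_not_pos fun hpos => absurd ((hh.2.1 i).1 hpos) (not_lt.2 hi)

lemma pos (hh : IsOSeq h s) {i : ℕ} (hi : i < s) : 0 < h i := (hh.2.1 i).2 hi

lemma le_mult (hh : IsOSeq h s) (i : ℕ) : h i ≤ mult h s := by
  by_cases hi : i < s
  · exact single_le_sum (fun _ _ => Nat.zero_le _) (mem_range.2 hi)
  · simp [hh.eq_zero (not_lt.1 hi)]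

lemma exchange (hh : IsOSeq h s) (hk : IsOSeq k s) {j i : ℕ} (hj : 1 ≤ j) (hji : j < i)
    (his : i < s) (hkj : k j < h j) (hik : h i < k i)
    (heq : ∀ x, j < x → x < i → h x = k x) : IsOSeq (addE (subE h j) i) s := by
  set h' := addE (subE h j) i
  have hval : ∀ x, h' x = if x = i then h x + 1 else if x = j then h x - 1 else h x := by
    intro x; simp only [h', addE, subE]; split_ifs <;> omega
  have hle_h : ∀ x, x ≠ i → h' x ≤ h x := by intro x hx; rw [hval]; split_ifs <;> omega
  have hge_h : ∀ x, x ≠ j → h x ≤ h' x := by intro x hx; rw [hval]; split_ifs <;> omega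
  have hge_k : ∀ x, j ≤ x → x < i → k x ≤ h' x := by
    intro x hjx hxi
    rw [hval, if_neg hxi.ne]
    rcases hjx.eq_or_lt with rfl | hjx
    · rw [if_pos rfl]; omega
    · rw [if_neg hjx.ne', heq x hjx hxi]
  have hle_k : ∀ x, j < x → x ≤ i → h' x ≤ k x := by
    intro x hjx hxi
    rw [hval, if_neg hjx.ne']
    rcases hxi.eq_or_lt with rfl | hxi
    · rw [if_pos rfl]; omega
    · rw [if_neg hxi.ne, heq x hjx hxi]
  refine ⟨by rw [hval, if_neg (by omega), if_neg (by omega), hh.1], fun x => ?_, fun t ht => ?_⟩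
  · constructor
    · intro hx
      by_contra hxs
      have := hle_h x (by omega)
      rw [hh.eq_zero (not_lt.1 hxs)] at this
      omega
    · intro hxs
      by_cases hxj : x = j
      · subst hxj; have := hk.pos hxs; rw [hval]; split_ifs <;> omega
      · exact lt_of_lt_of_le (hh.pos hxs) (hge_h x hxj)
  · by_cases hjt : j ≤ t ∧ t < i
    · calc h' (t + 1) ≤ k (t + 1) := hle_k _ (by omega) (by omega)
        _ ≤ mac t (k t) := hk.2.2 t ht
        _ ≤ mac t (h' t) := mac_mono t (hge_k t hjt.1 hjt.2)
    · calc h' (t + 1) ≤ h (t + 1) := hle_h _ (by omega)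
        _ ≤ mac t (h t) := hh.2.2 t ht
        _ ≤ mac t (h' t) := mac_mono t (hge_h t (by omega))

lemma exists_oLT_genus_le (hh : IsOSeq h s) (hk : IsOSeq k s) (hm : mult h s = mult k s)
    (hlt : oLT h k) :
    ∃ h', IsOSeq h' s ∧ mult h' s = mult h s ∧ oLT h h' ∧ genus h s ≤ genus h' s := by
  obtain ⟨ℓ, hℓs, hℓ, habove⟩ := hlt.exists_witness_lt fun _ => hk.eq_zero
  have hlow : ∑ x ∈ range ℓ, k x < ∑ x ∈ range ℓ, h x := by
    have htail : ∑ x ∈ Ico (ℓ + 1) s, h x = ∑ x ∈ Ico (ℓ + 1) s, k x :=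
      sum_congr rfl fun x hx => habove x (mem_Ico.1 hx).1
    unfold mult at hm
    rw [sum_range_eq_add_add_sum_Ico _ hℓs, sum_range_eq_add_add_sum_Ico _ hℓs, htail] at hm
    omega
  obtain ⟨j, i, hji, hiℓ, hkj, hik, heq⟩ := exists_exchange_indices hℓ hlow
  have hj : 1 ≤ j := Nat.one_le_iff_ne_zero.2 fun h0 => by rw [h0, hh.1, hk.1] at hkj; omega
  have hjs : j < s := by omega
  refine ⟨addE (subE h j) i, hh.exchange hk hj hji (by omega) hkj hik heq, ?_, ?_, ?_⟩
  · have hadd := sum_mul_addE (fun _ => 1) (subE h j) (show i < s by omega)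
    have hsub := sum_mul_subE (fun _ => 1) h hjs (by omega)
    simp only [one_mul] at hadd hsub
    unfold mult
    omega
  · refine ⟨i, by simp [addE, subE, hji.ne'], fun x hx => ?_⟩
    simp [addE, subE, hx.ne', (hji.trans hx).ne']
  · have hadd := sum_mul_addE (fun x => x - 1) (subE h j) (show i < s by omega)
    have hsub := sum_mul_subE (fun x => x - 1) h hjs (by omega)
    unfold genus
    omega

end IsOSeq

lemma minSeq_isOSeq {d s : ℕ} (hs : 2 ≤ s) : IsOSeq (minSeq d s) s := by
  have hpos : ∀ i, 0 < minSeq d s i ↔ i < s := by intro i; unfold minSeq; split_ifs <;> omega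
  have hle : ∀ i, 2 ≤ i → minSeq d s i ≤ 1 := by
    intro i hi; unfold minSeq; split_ifs <;> omega
  refine ⟨rfl, hpos, fun t ht => ?_⟩
  obtain ⟨t, rfl⟩ : ∃ t', t = t' + 1 := ⟨t - 1, by omega⟩
  rcases Nat.eq_zero_or_pos (minSeq d s (t + 1 + 1)) with hzero | hts
  · simp [hzero]
  · have := (hpos _).1 hts
    exact (hle _ (by omega)).trans (mac_pos t ((hpos _).2 (by omega)))

lemma minSeq_mult {d s : ℕ} (hs : 2 ≤ s) (hsd : s ≤ d) : mult (minSeq d s) s = d := by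
  obtain ⟨n, rfl⟩ : ∃ n, s = n + 2 := ⟨s - 2, by omega⟩
  have hmid : ∀ i ∈ range n, minSeq d (n + 2) (i + 1 + 1) = 1 := by
    intro i hi
    simp [minSeq, mem_range.1 hi]
  simp only [mult, sum_range_succ', sum_congr rfl hmid, sum_const, card_range, smul_eq_mul]
  simp only [mul_one, minSeq, zero_add, one_ne_zero, ↓reduceIte]
  omega

/-- For all `d ≥ s ≥ 2`, the set of finite O-sequences of multiplicity `d`
and length `s` is finite and nonempty, and its maximum `h_max` with respect to the total
order satisfies `g(h_max) = max{g(h)}` over this set. -/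
theorem stmt7 (d s : ℕ) (hs : 2 ≤ s) (hsd : s ≤ d) :
    {h : ℕ → ℕ | IsOSeq h s ∧ mult h s = d}.Finite ∧
    {h : ℕ → ℕ | IsOSeq h s ∧ mult h s = d}.Nonempty ∧
    ∃ hmax : ℕ → ℕ, IsOSeq hmax s ∧ mult hmax s = d ∧
      (∀ h : ℕ → ℕ, IsOSeq h s → mult h s = d → h ≠ hmax → oLT h hmax) ∧
      (∀ h : ℕ → ℕ, IsOSeq h s → mult h s = d → genus h s ≤ genus hmax s) := by
  set S := {h : ℕ → ℕ | IsOSeq h s ∧ mult h s = d}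
  have hfin : S.Finite := (finite_setOf_le_of_eq_zero s d).subset fun h ⟨hh, hm⟩ =>
    ⟨fun i => hm ▸ hh.le_mult i, fun _ => hh.eq_zero⟩
  have hne : S.Nonempty := ⟨minSeq d s, minSeq_isOSeq hs, minSeq_mult hs hsd⟩
  obtain ⟨hmax, ⟨hO, hm⟩, hle⟩ :=
    S.exists_max_image (fun h => toLex (genus h s, weight (d + 1) s h)) hfin hne
  refine ⟨hfin, hne, hmax, hO, hm, fun h hh hmh hne => ?_, fun h hh hmh => ?_⟩
  · refine (oLT_or_oLT_of_ne s (fun _ => hh.eq_zero) (fun _ => hO.eq_zero) hne).resolve_right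
      fun hgt => ?_
    obtain ⟨h', hh', hm', hlt', hg'⟩ := hO.exists_oLT_genus_le hh (hm.trans hmh.symm) hgt
    have hw := weight_lt_weight_of_oLT (b := d + 1)
      (fun i _ => Nat.lt_succ_of_le (hm ▸ hO.le_mult i)) (fun _ => hh'.eq_zero) hlt'
    have := Prod.Lex.toLex_le_toLex.1 (hle h' ⟨hh', hm'.trans hm⟩)
    omega
  · have := Prod.Lex.toLex_le_toLex.1 (hle h ⟨hh, hmh⟩)
    omega
end

section
/- Let d and s be integers with 7 ≤ ⌊d/2⌋ + 1 ≤ s ≤ d - 4, and set g_s(d) = C(s-1, 2) + C(d-s, 2). Then every finite O-sequence h of multiplicity d and length s with h ≠ (1, 2^{d-s}, 1^{2s-d-1}) satisfies g(h) ≤ g_s(d) - (d - s - 2). In particular, none of the integers g_s(d) - (d-s-3), g_s(d) - (d-s-4), …, g_s(d) - 1 is the genus of a finite O-sequence of multiplicity d and length s. -/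
/-
Write `d = s + r`. Macaulay's bound satisfies `a^⟨t⟩ = a` for `a ≤ t`, so along an O-sequence
the conditions `h_j ≥ 2` (for `j ≥ 1`) and `h_j ≥ 3` (for `j ≥ 2`) propagate downwards: the
entries `≥ 2` occupy an interval `[1, m]`, those `≥ 3` an interval `[2, c]`. Hence
`g(h) = C(s-1,2) + C(m,2) + Σ_j (j-1)(h_j - 2)`, and with `b = Σ_j (h_j - 2) = r - m` the last
sum is at most `min(m-1, b)·b`, because every index it sees satisfies `j - 1 ≤ c - 1 ≤ b`.
If `b = 0` then `h = (1, 2^r, 1^{s-r-1})`, whose genus is `g_s(d)`; otherwise the elementary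
inequality `C(m,2) + min(m-1, b)·b ≤ C(m+b-1, 2) + 1` gives `g(h) ≤ g_s(d) - (r - 2)`.
-/

open Finset

theorem mac_of_le {t a : ℕ} (h : a ≤ t) : mac t a = a := by
  induction t generalizing a with
  | zero => simp_all [mac]
  | succ t ih =>
    rcases Nat.eq_zero_or_pos a with rfl | ha
    · simp [mac]
    have hfg : Nat.findGreatest (fun n => n.choose (t + 1) ≤ a) (a + t + 1) = t + 1 := by
      refine Nat.findGreatest_eq_iff.mpr ⟨by omega, fun _ => by simp; omega, fun n hn hle => ?_⟩
      have := Nat.choose_le_choose (t + 1) (show t + 2 ≤ n by omega)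
      rw [Nat.choose_succ_self_right] at this
      omega
    simp only [mac, ha.ne', if_false, hfg, Nat.choose_self, ih (show a - 1 ≤ t by omega)]
    omega

theorem sum_range_sub_one (n : ℕ) : ∑ j ∈ range n, (j - 1) = (n - 1).choose 2 := by
  cases n with
  | zero => simp
  | succ n => simp [sum_range_succ', sum_range_id, Nat.choose_two_right]

theorem sub_one_le_choose_two (n : ℕ) : n - 1 ≤ n.choose 2 := by
  cases n with
  | zero => simp
  | succ n => rw [Nat.choose_succ_succ', Nat.choose_one_right]; omega

theorem choose_two_add_min_mul_le (m b : ℕ) (hb : 1 ≤ b) :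
    m.choose 2 + min (m - 1) b * b ≤ (m + b).choose 2 - (m + b - 2) := by
  rcases m with _ | a
  · simp
  have hpascal : (a + 1 + b).choose 2 = (a + b).choose 2 + (a + b) := by
    rw [show a + 1 + b = a + b + 1 by omega, Nat.choose_succ_succ, Nat.choose_one_right, add_comm]
  suffices ((a + 1).choose 2 + min a b * b : ℚ) ≤ (a + b).choose 2 + 1 by
    simp only [Nat.add_sub_cancel]
    have : (a + 1).choose 2 + min a b * b ≤ (a + b).choose 2 + 1 := by exact_mod_cast this
    omega
  have hb1 : (1 : ℚ) ≤ b := by exact_mod_cast hb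
  have hb2 : (0 : ℚ) ≤ (b - 1) * (b - 2) := by
    rcases hb.eq_or_lt with rfl | hb2
    · norm_num
    · have : (2 : ℚ) ≤ b := by exact_mod_cast hb2
      nlinarith
  rw [Nat.cast_choose_two, Nat.cast_choose_two]
  rcases le_total a b with hab | hab
  · have hab' : (a : ℚ) ≤ b := by exact_mod_cast hab
    rw [min_eq_left hab]
    push_cast
    nlinarith
  · have hab' : (b : ℚ) ≤ a := by exact_mod_cast hab
    rw [min_eq_right hab]
    push_cast
    nlinarith


namespace IsOSeq

variable {h : ℕ → ℕ} {s : ℕ}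

theorem one_le_length (hO : IsOSeq h s) : 1 ≤ s :=
  (hO.2.1 0).1 (by rw [hO.1]; exact Nat.one_pos)

theorem lt_apply_of_le (hO : IsOSeq h s) {a j k : ℕ} (haj : a ≤ j) (hj : 1 ≤ j) (hjk : j ≤ k)
    (hk : a < h k) : a < h j := by
  induction k, hjk using Nat.le_induction with
  | base => exact hk
  | succ k hjk ih =>
    refine ih (lt_of_not_ge fun hle => ?_)
    have := hO.2.2 k (hj.trans hjk)
    rw [mac_of_le (hle.trans (haj.trans hjk))] at this
    omega

theorem one_lt_apply_iff (hO : IsOSeq h s) {j : ℕ} (hj : j < s) :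
    1 < h j ↔ 1 ≤ j ∧ j ≤ topIdx h s := by
  constructor
  · intro h1
    refine ⟨Nat.one_le_iff_ne_zero.mpr fun hj0 => ?_, Nat.le_findGreatest (by omega) h1⟩
    rw [hj0, hO.1] at h1
    exact lt_irrefl 1 h1
  · rintro ⟨hj1, hjm⟩
    have htop : 1 < h (topIdx h s) :=
      Nat.findGreatest_of_ne_zero (P := fun j => 1 < h j) (n := s - 1) rfl (by omega)
    exact hO.lt_apply_of_le hj1 hj1 hjm htop

theorem filter_one_lt_eq_Ico (hO : IsOSeq h s) :
    (range s).filter (fun j => 1 < h j) = Ico 1 (topIdx h s + 1) := by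
  have hm : topIdx h s ≤ s - 1 := Nat.findGreatest_le _
  have hs := hO.one_le_length
  ext j
  simp only [mem_filter, mem_range, mem_Ico]
  constructor
  · rintro ⟨hj, h1⟩
    have := (hO.one_lt_apply_iff hj).1 h1
    omega
  · rintro ⟨hj1, hjm⟩
    exact ⟨by omega, (hO.one_lt_apply_iff (by omega)).2 ⟨hj1, by omega⟩⟩

theorem mult_eq (hO : IsOSeq h s) :
    mult h s = s + topIdx h s + ∑ j ∈ range s, (h j - 2) := by
  have hsplit : ∀ j ∈ range s, h j = 1 + (if 1 < h j then 1 else 0) + (h j - 2) := by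
    intro j hj
    have := (hO.2.1 j).2 (mem_range.1 hj)
    split_ifs <;> omega
  rw [mult, sum_congr rfl hsplit, sum_add_distrib, sum_add_distrib, ← card_filter,
    hO.filter_one_lt_eq_Ico]
  simp

theorem genus_eq (hO : IsOSeq h s) :
    genus h s = (s - 1).choose 2 + (topIdx h s).choose 2 + ∑ j ∈ range s, (j - 1) * (h j - 2) := by
  have hsplit : ∀ j ∈ range s,
      (j - 1) * h j = (j - 1) + (if 1 < h j then j - 1 else 0) + (j - 1) * (h j - 2) := by
    intro j hj
    have := (hO.2.1 j).2 (mem_range.1 hj)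
    obtain ⟨x, hx⟩ : ∃ x, h j = x + 1 := ⟨h j - 1, by omega⟩
    rcases x with _ | x
    · simp [hx]
    · simp [hx]
      ring
  have hIco : ∑ j ∈ Ico 1 (topIdx h s + 1), (j - 1) = (topIdx h s).choose 2 := by
    rw [← Nat.add_sub_cancel (topIdx h s) 1, ← sum_range_sub_one, range_eq_Ico,
      sum_eq_sum_Ico_succ_bot (Nat.succ_pos _)]
    simp
  rw [genus, sum_congr rfl hsplit, sum_add_distrib, sum_add_distrib, ← sum_filter,
    hO.filter_one_lt_eq_Ico, hIco, sum_range_sub_one]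

theorem sub_one_le_of_two_lt_apply (hO : IsOSeq h s) {j : ℕ} (hj : j < s) (h2 : 2 < h j) :
    j - 1 ≤ min (topIdx h s - 1) (∑ i ∈ range s, (h i - 2)) := by
  refine le_min (Nat.sub_le_sub_right ((hO.one_lt_apply_iff hj).1 (by omega)).2 1) ?_
  calc j - 1 = #(Ico 2 (j + 1)) • 1 := by simp
    _ ≤ ∑ i ∈ Ico 2 (j + 1), (h i - 2) := by
      refine card_nsmul_le_sum _ _ _ fun i hi => ?_
      rw [mem_Ico] at hi
      have := hO.lt_apply_of_le hi.1 (by omega) (by omega : i ≤ j) h2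
      omega
    _ ≤ ∑ i ∈ range s, (h i - 2) := by
      refine sum_le_sum_of_subset fun i hi => ?_
      rw [mem_Ico] at hi
      rw [mem_range]
      omega

theorem sum_weighted_excess_le (hO : IsOSeq h s) :
    ∑ j ∈ range s, (j - 1) * (h j - 2) ≤
      min (topIdx h s - 1) (∑ j ∈ range s, (h j - 2)) * ∑ j ∈ range s, (h j - 2) := by
  rw [mul_sum]
  refine sum_le_sum fun j hj => ?_
  by_cases h2 : 2 < h j
  · exact Nat.mul_le_mul_right _ (hO.sub_one_le_of_two_lt_apply (mem_range.1 hj) h2)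
  · simp [Nat.sub_eq_zero_of_le (not_lt.1 h2)]

theorem eq_maxSeq (hO : IsOSeq h s) (hle : ∀ j < s, h j ≤ 2) :
    h = maxSeq (s + topIdx h s) s := by
  have hm : topIdx h s ≤ s - 1 := Nat.findGreatest_le _
  have hs := hO.one_le_length
  funext j
  simp only [maxSeq, Nat.add_sub_cancel_left]
  split_ifs with hj0 hjm hjs
  · rw [hj0, hO.1]
  · have := hle j (by omega)
    have := (hO.one_lt_apply_iff (by omega)).2 ⟨by omega, hjm⟩
    omega
  · have := (hO.2.1 j).2 hjs
    have := (hO.one_lt_apply_iff hjs).not.2 (by omega)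
    omega
  · exact Nat.eq_zero_of_not_pos fun hpos => hjs ((hO.2.1 j).1 hpos)

theorem genus_eq_or_le (hO : IsOSeq h s) :
    (h = maxSeq (mult h s) s ∧
        genus h s = (s - 1).choose 2 + (mult h s - s).choose 2) ∨
      genus h s ≤ (s - 1).choose 2 + (mult h s - s).choose 2 - (mult h s - s - 2) := by
  have hmult := hO.mult_eq
  have hgenus := hO.genus_eq
  have hexcess := hO.sum_weighted_excess_le
  generalize hbdef : ∑ j ∈ range s, (h j - 2) = b at hmult hexcess
  rcases Nat.eq_zero_or_pos b with hb | hb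
  · rw [hb] at hbdef
    have hle : ∀ j < s, h j ≤ 2 := fun j hj =>
      Nat.le_of_sub_eq_zero (sum_eq_zero_iff.1 hbdef j (mem_range.2 hj))
    rw [hb, mul_zero, nonpos_iff_eq_zero] at hexcess
    rw [hb, add_zero] at hmult
    refine Or.inl ⟨hmult ▸ hO.eq_maxSeq hle, ?_⟩
    rw [hgenus, hexcess, hmult]
    simp
  · have := choose_two_add_min_mul_le (topIdx h s) b hb
    have := sub_one_le_choose_two (topIdx h s + b)
    refine Or.inr ?_
    rw [hgenus, hmult, add_assoc s, Nat.add_sub_cancel_left]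
    omega

end IsOSeq

theorem stmt12_general (d s : ℕ) :
    (∀ h : ℕ → ℕ, IsOSeq h s → mult h s = d → h ≠ maxSeq d s →
      genus h s ≤ Nat.choose (s - 1) 2 + Nat.choose (d - s) 2 - (d - s - 2)) ∧
    (∀ i, 1 ≤ i → i ≤ d - s - 3 →
      ∀ h : ℕ → ℕ, IsOSeq h s → mult h s = d →
        genus h s ≠ Nat.choose (s - 1) 2 + Nat.choose (d - s) 2 - i) := by
  refine ⟨fun h hO hd hne => ?_, fun i hi1 hi h hO hd hg => ?_⟩
  · subst hd
    exact hO.genus_eq_or_le.resolve_left fun hmax => hne hmax.1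
  · subst hd
    have hr := sub_one_le_choose_two (mult h s - s)
    rcases hO.genus_eq_or_le with ⟨-, hmax⟩ | hle <;> omega

/-- Let `7 ≤ ⌊d/2⌋ + 1 ≤ s ≤ d - 4` and `g_s(d) = C(s-1,2) + C(d-s,2)`.
Then every finite O-sequence of multiplicity `d` and length `s` other than
`(1, 2^{d-s}, 1^{2s-d-1})` has genus at most `g_s(d) - (d-s-2)`; in particular none of the
integers `g_s(d) - i` for `1 ≤ i ≤ d-s-3` is the genus of a finite O-sequence of
multiplicity `d` and length `s`. -/
theorem stmt12 (d s : ℕ) (h7 : 7 ≤ d / 2 + 1) (hs1 : d / 2 + 1 ≤ s) (hs2 : s ≤ d - 4) :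
    (∀ h : ℕ → ℕ, IsOSeq h s → mult h s = d → h ≠ maxSeq d s →
      genus h s ≤ Nat.choose (s - 1) 2 + Nat.choose (d - s) 2 - (d - s - 2)) ∧
    (∀ i, 1 ≤ i → i ≤ d - s - 3 →
      ∀ h : ℕ → ℕ, IsOSeq h s → mult h s = d →
        genus h s ≠ Nat.choose (s - 1) 2 + Nat.choose (d - s) 2 - i) :=
  stmt12_general d s
end
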